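/- arXiv:2411.02940 — 9 statements merged into one kernel-verified Lean document; each statement's English description precedes it below -/
import Mathlib

section
/- Let n ≥ 1 be an integer and let u₀ ∈ L¹(ℝⁿ). Set M = ∫_{ℝⁿ} u₀(x) dx. Then the solution u(t,·) = u₀ * G_t of the heat equation with initial datum u₀ satisfies ‖u₀ * G_t − M·G_t‖_{L¹(ℝⁿ)} → 0 as t → ∞. -/
/-!
Since `∫ u₀ = M`, the difference `u₀ * G_t - M G_t` is `x ↦ ∫ u₀ y (G_t (x - y) - G_t x) dy`, so by
Minkowski's inequality its `L¹` norm is at most `∫ |u₀ y| ‖G_t (· - y) - G_t‖₁ dy`. The kernel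
`G_t` is the mass-preserving dilation of `G_1` by `√t`, hence
`‖G_t (· - y) - G_t‖₁ = ‖G_1 (· - y/√t) - G_1‖₁`. This tends to `0` for each `y` by continuity of
translation in `L¹` and is bounded by `2 ‖G_1‖₁`, so dominated convergence finishes the proof.
-/

open MeasureTheory Filter Real

/-- The Euclidean heat kernel on `ℝⁿ`: `G_t(x) = (4πt)^{-n/2} exp(-‖x‖²/(4t))`. -/
noncomputable def heatKernel (n : ℕ) (t : ℝ) (x : EuclideanSpace ℝ (Fin n)) : ℝ :=
  (4 * Real.pi * t) ^ (-(n : ℝ) / 2) * Real.exp (-‖x‖ ^ 2 / (4 * t))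

open scoped ENNReal Topology
open Module

section Translation

variable {G F : Type*} [AddGroup G] [MeasurableSpace G] [NormedAddCommGroup F] {μ : Measure G}

theorem continuous_eLpNorm_comp_sub_sub [TopologicalSpace G] [IsTopologicalAddGroup G]
    [BorelSpace G] [IsLocallyFiniteMeasure μ] [μ.InnerRegularCompactLTTop] [μ.IsAddRightInvariant]
    {p : ℝ≥0∞} [Fact (1 ≤ p)] (hp : p ≠ ∞) {f : G → F} (hf : MemLp f p μ) :
    Continuous fun h : G => eLpNorm (fun x => f (x - h) - f x) p μ := by
  let τ : G → C(G, G) := fun h => ⟨(· - h), by fun_prop⟩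
  have hτ : Continuous τ :=
    ContinuousMap.continuous_of_continuous_uncurry _ (continuous_snd.sub continuous_fst)
  have hτμ (h : G) : MeasurePreserving (τ h) μ μ := measurePreserving_sub_right μ h
  have hcont := continuous_const.compMeasurePreservingLp hτ hτμ hp (f := fun _ => hf.toLp f)
  refine (hcont.edist (continuous_const (y := hf.toLp f))).congr fun h => ?_
  rw [Lp.edist_def]
  apply eLpNorm_congr_ae
  filter_upwards [Lp.coeFn_compMeasurePreserving (hf.toLp f) (hτμ h),
    (hτμ h).quasiMeasurePreserving.ae_eq_comp hf.coeFn_toLp, hf.coeFn_toLp] with x h₁ h₂ h₃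
  rw [Pi.sub_apply, h₁, h₂, h₃]
  rfl

theorem eLpNorm_comp_sub_sub_le [MeasurableAdd G] [μ.IsAddRightInvariant] {p : ℝ≥0∞} (hp : 1 ≤ p)
    {f : G → F} (hf : AEStronglyMeasurable f μ) (h : G) :
    eLpNorm (fun x => f (x - h) - f x) p μ ≤ 2 * eLpNorm f p μ := by
  have hτ := measurePreserving_sub_right μ h
  calc eLpNorm (fun x => f (x - h) - f x) p μ
      ≤ eLpNorm (f ∘ (· - h)) p μ + eLpNorm f p μ :=
        eLpNorm_sub_le (hf.comp_measurePreserving hτ) hf hp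
    _ = 2 * eLpNorm f p μ := by rw [eLpNorm_comp_measurePreserving hf hτ, two_mul]

theorem eLpNorm_convolution_sub_integral_mul_le [MeasurableAdd₂ G] [MeasurableNeg G] [SFinite μ]
    [μ.IsAddRightInvariant] {u K : G → ℝ} (hu : Integrable u μ) (hK : Integrable K μ) :
    eLpNorm (fun x => (∫ y, u y * K (x - y) ∂μ) - (∫ y, u y ∂μ) * K x) 1 μ ≤
      ∫⁻ y, ‖u y‖ₑ * eLpNorm (fun x => K (x - y) - K x) 1 μ ∂μ := by
  have hconv : ∀ᵐ x ∂μ, (∫ y, u y * K (x - y) ∂μ) - (∫ y, u y ∂μ) * K x =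
      ∫ y, u y * (K (x - y) - K x) ∂μ := by
    filter_upwards [hu.ae_convolution_exists (ContinuousLinearMap.mul ℝ ℝ) hK] with x hx
    have hx' : Integrable (fun y => u y * K (x - y)) μ := hx
    simp_rw [mul_sub]
    rw [integral_sub hx' (hu.mul_const _), integral_mul_const]
  have hmeas : AEMeasurable (fun p : G × G => ‖u p.2‖ₑ * ‖K (p.1 - p.2) - K p.1‖ₑ) (μ.prod μ) :=
    hu.1.enorm.comp_snd.mul ((hK.1.comp_quasiMeasurePreserving
      (quasiMeasurePreserving_sub_of_right_invariant μ μ)).sub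
        (hK.1.comp_quasiMeasurePreserving Measure.quasiMeasurePreserving_fst)).enorm
  calc eLpNorm _ 1 μ = ∫⁻ x, ‖∫ y, u y * (K (x - y) - K x) ∂μ‖ₑ ∂μ := by
        rw [eLpNorm_congr_ae hconv, eLpNorm_one_eq_lintegral_enorm]
    _ ≤ ∫⁻ x, ∫⁻ y, ‖u y‖ₑ * ‖K (x - y) - K x‖ₑ ∂μ ∂μ := lintegral_mono fun x =>
        (enorm_integral_le_lintegral_enorm _).trans_eq (by simp_rw [enorm_mul])
    _ = ∫⁻ y, ∫⁻ x, ‖u y‖ₑ * ‖K (x - y) - K x‖ₑ ∂μ ∂μ := lintegral_lintegral_swap hmeas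
    _ = _ := by simp_rw [lintegral_const_mul' _ _ enorm_ne_top, eLpNorm_one_eq_lintegral_enorm]

end Translation

section Dilation

variable {E F : Type*} [NormedAddCommGroup E] [NormedSpace ℝ E] [FiniteDimensional ℝ E]
  [MeasurableSpace E] [BorelSpace E] (μ : Measure E) [μ.IsAddHaarMeasure]

theorem lintegral_comp_smul_addHaar (f : E → ℝ≥0∞) {c : ℝ} (hc : c ≠ 0) :
    ∫⁻ x, f (c • x) ∂μ = ENNReal.ofReal |(c ^ finrank ℝ E)⁻¹| * ∫⁻ x, f x ∂μ := by
  rw [← smul_eq_mul, ← lintegral_smul_measure, ← Measure.map_addHaar_smul μ hc]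
  exact (lintegral_map_equiv f (Homeomorph.smulOfNeZero c hc).toMeasurableEquiv).symm

theorem eLpNorm_dilation_comp_sub_sub [NormedAddCommGroup F] [NormedSpace ℝ F] (f : E → F)
    {c : ℝ} (hc : 0 < c) (y : E) :
    eLpNorm (fun x => (c ^ finrank ℝ E)⁻¹ • f (c⁻¹ • (x - y)) -
        (c ^ finrank ℝ E)⁻¹ • f (c⁻¹ • x)) 1 μ =
      eLpNorm (fun x => f (x - c⁻¹ • y) - f x) 1 μ := by
  simp_rw [eLpNorm_one_eq_lintegral_enorm, ← smul_sub, enorm_smul, smul_sub c⁻¹]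
  rw [lintegral_const_mul' _ _ enorm_ne_top,
    lintegral_comp_smul_addHaar μ (fun z => ‖f (z - c⁻¹ • y) - f z‖ₑ) (inv_ne_zero hc.ne'),
    ← mul_assoc]
  have hc' : ‖(c ^ finrank ℝ E)⁻¹‖ₑ * ENNReal.ofReal |(c⁻¹ ^ finrank ℝ E)⁻¹| = 1 := by
    rw [inv_pow, inv_inv, abs_of_pos (by positivity), Real.enorm_eq_ofReal (by positivity),
      ← ENNReal.ofReal_mul (by positivity), inv_mul_cancel₀ (by positivity), ENNReal.ofReal_one]
  rw [hc', one_mul]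

end Dilation

theorem tendsto_lintegral_enorm_mul_eLpNorm_comp_smul_sub_sub {E F F' : Type*}
    [NormedAddCommGroup E] [NormedSpace ℝ E] [MeasurableSpace E] [BorelSpace E]
    [NormedAddCommGroup F] [NormedAddCommGroup F'] {μ : Measure E} [IsLocallyFiniteMeasure μ]
    [μ.InnerRegularCompactLTTop] [μ.IsAddRightInvariant] {u : E → F} (hu : Integrable u μ)
    {K : E → F'} (hK : Integrable K μ) {ι : Type*} {l : Filter ι} [l.IsCountablyGenerated]
    {c : ι → ℝ} (hc : Tendsto c l (𝓝 0)) :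
    Tendsto (fun i => ∫⁻ y, ‖u y‖ₑ * eLpNorm (fun x => K (x - c i • y) - K x) 1 μ ∂μ) l (𝓝 0) := by
  have hK₁ : MemLp K 1 μ := memLp_one_iff_integrable.2 hK
  have hφ := continuous_eLpNorm_comp_sub_sub ENNReal.one_ne_top hK₁
  have hφ₀ : Tendsto (fun h : E => eLpNorm (fun x => K (x - h) - K x) 1 μ) (𝓝 0) (𝓝 0) := by
    simpa using hφ.tendsto 0
  have hbound : ∫⁻ y, ‖u y‖ₑ * (2 * eLpNorm K 1 μ) ∂μ ≠ ∞ := by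
    have hC : 2 * eLpNorm K 1 μ ≠ ∞ := ENNReal.mul_ne_top ENNReal.ofNat_ne_top hK₁.eLpNorm_ne_top
    rw [lintegral_mul_const' _ _ hC]
    exact ENNReal.mul_ne_top hu.2.ne hC
  simpa using tendsto_lintegral_filter_of_dominated_convergence' _
    (Eventually.of_forall fun i =>
      hu.1.enorm.mul (hφ.measurable.comp (measurable_const_smul _)).aemeasurable)
    (Eventually.of_forall fun i => ae_of_all _ fun y =>
      mul_le_mul_right (eLpNorm_comp_sub_sub_le le_rfl hK.1 _) _) hbound
    (ae_of_all _ fun y => ENNReal.Tendsto.const_mul (hφ₀.comp (by simpa using hc.smul_const y))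
      (Or.inr enorm_ne_top))

theorem integrable_heatKernel (n : ℕ) {t : ℝ} (ht : 0 < t) : Integrable (heatKernel n t) := by
  have hb : 0 < (1 / (4 * t) : ℂ).re := by norm_cast; positivity
  have h := ((GaussianFourier.integrable_cexp_neg_mul_sq_norm_add hb 0
    (0 : EuclideanSpace ℝ (Fin n))).norm.const_mul ((4 * π * t) ^ (-(n : ℝ) / 2)))
  refine h.congr (Eventually.of_forall fun x => ?_)
  simp only [heatKernel, Complex.norm_exp, Complex.mul_re, zero_mul, add_zero]
  norm_cast
  ring_nf

theorem heatKernel_eq_dilation (n : ℕ) {t : ℝ} (ht : 0 < t) (x : EuclideanSpace ℝ (Fin n)) :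
    heatKernel n t x = (√t ^ n)⁻¹ * heatKernel n 1 ((√t)⁻¹ • x) := by
  have h4π : 0 ≤ 4 * π := by positivity
  have hsqrt : √t ^ n = t ^ ((n : ℝ) / 2) := by
    rw [sqrt_eq_rpow, ← rpow_natCast, ← rpow_mul ht.le]
    ring_nf
  rw [heatKernel, heatKernel, mul_rpow h4π ht.le, norm_smul, mul_pow, norm_inv,
    norm_of_nonneg (sqrt_nonneg t), inv_pow, sq_sqrt ht.le, hsqrt, ← rpow_neg ht.le]
  ring_nf

theorem eLpNorm_heatKernel_comp_sub_sub (n : ℕ) {t : ℝ} (ht : 0 < t)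
    (y : EuclideanSpace ℝ (Fin n)) :
    eLpNorm (fun x => heatKernel n t (x - y) - heatKernel n t x) 1 volume =
      eLpNorm (fun x => heatKernel n 1 (x - (√t)⁻¹ • y) - heatKernel n 1 x) 1 volume := by
  have := eLpNorm_dilation_comp_sub_sub volume (heatKernel n 1) (sqrt_pos.2 ht) y
  simp_rw [finrank_euclideanSpace_fin, smul_eq_mul, ← heatKernel_eq_dilation n ht] at this
  exact this

theorem heat_asymptotics_L1_general (n : ℕ)
    (u₀ : EuclideanSpace ℝ (Fin n) → ℝ) (hu₀ : Integrable u₀) :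
    Tendsto
      (fun t : ℝ =>
        eLpNorm
          (fun x : EuclideanSpace ℝ (Fin n) =>
            (∫ y, u₀ y * heatKernel n t (x - y)) - (∫ x, u₀ x) * heatKernel n t x)
          1 volume)
      atTop (nhds 0) := by
  have hlim := tendsto_lintegral_enorm_mul_eLpNorm_comp_smul_sub_sub hu₀
    (integrable_heatKernel n one_pos) (tendsto_inv_atTop_zero.comp tendsto_sqrt_atTop)
  refine tendsto_of_tendsto_of_tendsto_of_le_of_le' tendsto_const_nhds hlim
    (Eventually.of_forall fun _ => zero_le) ?_
  filter_upwards [eventually_gt_atTop 0] with t ht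
  calc _ ≤ ∫⁻ y, ‖u₀ y‖ₑ *
          eLpNorm (fun x => heatKernel n t (x - y) - heatKernel n t x) 1 volume :=
        eLpNorm_convolution_sub_integral_mul_le hu₀ (integrable_heatKernel n ht)
    _ = _ := by simp_rw [eLpNorm_heatKernel_comp_sub_sub n ht, Function.comp_apply]

/-- For `u₀ ∈ L¹(ℝⁿ)` with mass `M = ∫ u₀`, the solution `u₀ * G_t` of the heat
equation satisfies `‖u₀ * G_t − M · G_t‖_{L¹} → 0` as `t → ∞`. -/
theorem heat_asymptotics_L1 (n : ℕ) (hn : 1 ≤ n)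
    (u₀ : EuclideanSpace ℝ (Fin n) → ℝ) (hu₀ : Integrable u₀) :
    Tendsto
      (fun t : ℝ =>
        eLpNorm
          (fun x : EuclideanSpace ℝ (Fin n) =>
            (∫ y, u₀ y * heatKernel n t (x - y)) - (∫ x, u₀ x) * heatKernel n t x)
          1 volume)
      atTop (nhds 0) :=
  heat_asymptotics_L1_general n u₀ hu₀
end

section
/- Let n ≥ 1 be an integer and let u₀ ∈ L¹(ℝⁿ). Set M = ∫_{ℝⁿ} u₀(x) dx. Then t^{n/2} · ‖u₀ * G_t − M·G_t‖_{L^∞(ℝⁿ)} → 0 as t → ∞. -/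
open MeasureTheory Filter Real

/-! Writing `G_t(x) = (4πt)^{-n/2} g(‖x‖/√(4t))` with the Gaussian profile `g(s) = exp(-s²)`,
which takes values in `(0, 1]` and is `1`-Lipschitz, gives
`|G_t(x - y) - G_t(x)| ≤ (4πt)^{-n/2} min(1, ‖y‖/√(4t))`. Integrating against `|u₀|`,
`t^{n/2} ‖u₀ * G_t - M G_t‖_∞ ≤ (4π)^{-n/2} ∫ min(1, ‖y‖/√(4t)) |u₀ y| dy`,
and the right-hand side tends to `0` by dominated convergence. -/

lemma lipschitzWith_one_exp_neg_sq : LipschitzWith 1 (fun s : ℝ => exp (-s ^ 2)) := by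
  have hderiv (s : ℝ) : HasDerivAt (fun s : ℝ => exp (-s ^ 2)) (exp (-s ^ 2) * (-(2 * s))) s :=
    ((hasDerivAt_pow 2 s).neg.congr_deriv (by simp)).exp
  refine lipschitzWith_of_nnnorm_deriv_le (fun s => (hderiv s).differentiableAt) fun s => ?_
  rw [(hderiv s).deriv, ← NNReal.coe_le_coe, coe_nnnorm, NNReal.coe_one, norm_mul,
    norm_neg, norm_of_nonneg (exp_pos _).le, Real.norm_eq_abs, abs_mul, abs_two]
  -- `2|s| ≤ 1 + s² ≤ exp (s²)`
  have h : 2 * |s| ≤ exp (s ^ 2) := by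
    nlinarith [sq_nonneg (|s| - 1), sq_abs s, add_one_le_exp (s ^ 2)]
  calc exp (-s ^ 2) * (2 * |s|) ≤ exp (-s ^ 2) * exp (s ^ 2) := by gcongr
    _ = 1 := by rw [← exp_add, neg_add_cancel, exp_zero]

lemma exp_neg_sq_le_one (s : ℝ) : exp (-s ^ 2) ≤ 1 :=
  exp_le_one_iff.2 (neg_nonpos.2 (sq_nonneg s))

lemma abs_exp_neg_sq_sub_exp_neg_sq_le (a b : ℝ) :
    |exp (-a ^ 2) - exp (-b ^ 2)| ≤ min 1 |a - b| := by
  refine le_min ?_ ?_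
  · exact abs_sub_le_of_nonneg_of_le (exp_pos _).le (exp_neg_sq_le_one a) (exp_pos _).le
      (exp_neg_sq_le_one b)
  · simpa [dist_eq] using lipschitzWith_one_exp_neg_sq.dist_le_mul a b

lemma heatKernel_eq {t : ℝ} (ht : 0 ≤ t) (n : ℕ) (x : EuclideanSpace ℝ (Fin n)) :
    heatKernel n t x = (4 * π * t) ^ (-(n : ℝ) / 2) * exp (-(‖x‖ / √(4 * t)) ^ 2) := by
  rw [heatKernel, div_pow, sq_sqrt (by positivity), neg_div (4 * t)]

lemma abs_heatKernel_le {t : ℝ} (ht : 0 ≤ t) (n : ℕ) (x : EuclideanSpace ℝ (Fin n)) :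
    |heatKernel n t x| ≤ (4 * π * t) ^ (-(n : ℝ) / 2) := by
  rw [heatKernel_eq ht, abs_mul, abs_of_nonneg (by positivity), abs_of_pos (exp_pos _)]
  exact mul_le_of_le_one_right (by positivity) (exp_neg_sq_le_one _)

lemma abs_heatKernel_sub_le {t : ℝ} (ht : 0 ≤ t) (n : ℕ) (x y : EuclideanSpace ℝ (Fin n)) :
    |heatKernel n t (x - y) - heatKernel n t x| ≤
      (4 * π * t) ^ (-(n : ℝ) / 2) * min 1 (‖y‖ / √(4 * t)) := by
  rw [heatKernel_eq ht, heatKernel_eq ht, ← mul_sub, abs_mul, abs_of_nonneg (by positivity)]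
  gcongr
  refine (abs_exp_neg_sq_sub_exp_neg_sq_le _ _).trans (min_le_min_left _ ?_)
  rw [← sub_div, abs_div, abs_of_nonneg (sqrt_nonneg _)]
  gcongr
  simpa using abs_norm_sub_norm_le (x - y) x

lemma norm_integral_mul_sub_integral_mul_le {α : Type*} [MeasurableSpace α] {μ : Measure α}
    {f g ω : α → ℝ} {c : ℝ} (hf : Integrable f μ) (hfg : Integrable (fun y => f y * g y) μ)
    (hω : Integrable (fun y => ω y * |f y|) μ) (hgω : ∀ y, |g y - c| ≤ ω y) :
    ‖(∫ y, f y * g y ∂μ) - (∫ y, f y ∂μ) * c‖ ≤ ∫ y, ω y * |f y| ∂μ := by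
  rw [← integral_mul_const, ← integral_sub hfg (hf.mul_const c)]
  refine norm_integral_le_of_norm_le hω (Eventually.of_forall fun y => ?_)
  rw [← mul_sub, norm_mul, Real.norm_eq_abs, Real.norm_eq_abs, mul_comm]
  exact mul_le_mul_of_nonneg_right (hgω y) (abs_nonneg _)

lemma tendsto_integral_min_one_norm_div_mul_abs {E : Type*} [SeminormedAddCommGroup E]
    [MeasurableSpace E] [OpensMeasurableSpace E] {μ : Measure E} {f : E → ℝ}
    (hf : Integrable f μ) :
    Tendsto (fun r : ℝ => ∫ y, min 1 (‖y‖ / r) * |f y| ∂μ) atTop (nhds 0) := by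
  have hmeas (r : ℝ) : AEStronglyMeasurable (fun y => min 1 (‖y‖ / r) * |f y|) μ :=
    (by fun_prop : Continuous fun y : E => min 1 (‖y‖ / r)).aestronglyMeasurable.mul
      hf.abs.aestronglyMeasurable
  have hbound : ∀ᶠ r : ℝ in atTop, ∀ᵐ y ∂μ, ‖min 1 (‖y‖ / r) * |f y|‖ ≤ |f y| := by
    filter_upwards [eventually_ge_atTop 0] with r hr
    refine Eventually.of_forall fun y => ?_
    have h0 : 0 ≤ min 1 (‖y‖ / r) := le_min zero_le_one (by positivity)
    rw [Real.norm_eq_abs, abs_mul, abs_abs, abs_of_nonneg h0]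
    exact mul_le_of_le_one_left (abs_nonneg _) (min_le_left _ _)
  have hlim (y : E) : Tendsto (fun r : ℝ => min 1 (‖y‖ / r) * |f y|) atTop (nhds 0) := by
    simpa using ((tendsto_const_nhds (x := (1 : ℝ))).min
      (tendsto_const_nhds (x := ‖y‖).div_atTop tendsto_id)).mul_const |f y|
  simpa using tendsto_integral_filter_of_dominated_convergence _
    (Eventually.of_forall hmeas) hbound hf.abs (Eventually.of_forall hlim)

lemma eLpNorm_top_heatKernel_conv_sub_mass_le {t : ℝ} (ht : 0 ≤ t) {n : ℕ}
    {u₀ : EuclideanSpace ℝ (Fin n) → ℝ} (hu₀ : Integrable u₀) :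
    eLpNorm (fun x => (∫ y, u₀ y * heatKernel n t (x - y)) - (∫ x, u₀ x) * heatKernel n t x)
        ⊤ volume ≤
      ENNReal.ofReal ((4 * π * t) ^ (-(n : ℝ) / 2) * ∫ y, min 1 (‖y‖ / √(4 * t)) * |u₀ y|) := by
  set c := (4 * π * t) ^ (-(n : ℝ) / 2)
  have hc : 0 ≤ c := by positivity
  have hG : Continuous (heatKernel n t) := by unfold heatKernel; fun_prop
  have hmin : Continuous fun y : EuclideanSpace ℝ (Fin n) => c * min 1 (‖y‖ / √(4 * t)) := by
    fun_prop
  rw [eLpNorm_exponent_top, ← integral_const_mul]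
  refine eLpNormEssSup_le_of_ae_bound (Eventually.of_forall fun x => ?_)
  simp_rw [← mul_assoc]
  refine norm_integral_mul_sub_integral_mul_le hu₀
    (hu₀.mul_bdd (hG.comp (continuous_sub_left x)).aestronglyMeasurable
      (Eventually.of_forall fun y => abs_heatKernel_le ht n (x - y)))
    (hu₀.abs.bdd_mul (c := c) hmin.aestronglyMeasurable (Eventually.of_forall fun y => ?_))
    (abs_heatKernel_sub_le ht n x)
  rw [Real.norm_eq_abs, abs_of_nonneg (by positivity)]
  exact mul_le_of_le_one_right hc (min_le_left _ _)

theorem heat_asymptotics_Linfty_general (n : ℕ)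
    (u₀ : EuclideanSpace ℝ (Fin n) → ℝ) (hu₀ : Integrable u₀) :
    Tendsto
      (fun t : ℝ =>
        ENNReal.ofReal (t ^ ((n : ℝ) / 2)) *
          eLpNorm
            (fun x : EuclideanSpace ℝ (Fin n) =>
              (∫ y, u₀ y * heatKernel n t (x - y)) - (∫ x, u₀ x) * heatKernel n t x)
            ⊤ volume)
      atTop (nhds 0) := by
  have hI : Tendsto (fun t : ℝ => ∫ y, min 1 (‖y‖ / √(4 * t)) * |u₀ y|) atTop (nhds 0) :=
    (tendsto_integral_min_one_norm_div_mul_abs hu₀).comp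
      (tendsto_sqrt_atTop.comp (tendsto_id.const_mul_atTop four_pos))
  have hscale {t : ℝ} (ht : 0 < t) :
      t ^ ((n : ℝ) / 2) * (4 * π * t) ^ (-(n : ℝ) / 2) = (4 * π) ^ (-(n : ℝ) / 2) := by
    rw [mul_rpow (by positivity) ht.le, mul_left_comm, ← rpow_add ht, neg_div,
      add_neg_cancel, rpow_zero, mul_one]
  refine tendsto_of_tendsto_of_tendsto_of_le_of_le' tendsto_const_nhds
    (by simpa only [mul_zero, ENNReal.ofReal_zero] using
      ENNReal.tendsto_ofReal (hI.const_mul ((4 * π) ^ (-(n : ℝ) / 2))))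
    (Eventually.of_forall fun _ => zero_le) ?_
  filter_upwards [eventually_gt_atTop 0] with t ht
  calc _ ≤ ENNReal.ofReal (t ^ ((n : ℝ) / 2)) * ENNReal.ofReal ((4 * π * t) ^ (-(n : ℝ) / 2) *
          ∫ y, min 1 (‖y‖ / √(4 * t)) * |u₀ y|) := by
        gcongr
        exact eLpNorm_top_heatKernel_conv_sub_mass_le ht.le hu₀
    _ = _ := by rw [← ENNReal.ofReal_mul (by positivity), ← mul_assoc, hscale ht]

/-- For `u₀ ∈ L¹(ℝⁿ)` with mass `M = ∫ u₀`, one has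
`t^{n/2} · ‖u₀ * G_t − M · G_t‖_{L^∞} → 0` as `t → ∞`. -/
theorem heat_asymptotics_Linfty (n : ℕ) (hn : 1 ≤ n)
    (u₀ : EuclideanSpace ℝ (Fin n) → ℝ) (hu₀ : Integrable u₀) :
    Tendsto
      (fun t : ℝ =>
        ENNReal.ofReal (t ^ ((n : ℝ) / 2)) *
          eLpNorm
            (fun x : EuclideanSpace ℝ (Fin n) =>
              (∫ y, u₀ y * heatKernel n t (x - y)) - (∫ x, u₀ x) * heatKernel n t x)
            ⊤ volume)
      atTop (nhds 0) :=
  heat_asymptotics_Linfty_general n u₀ hu₀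
end

section
/- Let ρ ∈ E be nonzero and let K > 0. Then there exist C > 0 and θ₀ ∈ (0,1) such that for every θ ∈ (0, θ₀] and all vectors a, b ∈ E satisfying ‖a‖ ≥ θ^{−2}, ‖a − b‖ ≤ K, and ∠(a, ρ) ≤ θ, one has |⟨ρ, a⟩ − ⟨ρ, b⟩ − ‖ρ‖·(‖a‖ − ‖b‖)| ≤ C·θ. -/
/-!
Write `b = a - v` and let `ρ' = (‖ρ‖ / ‖a‖) • a` be `ρ` rotated onto the ray of `a`. The error
term splits as `⟪ρ - ρ', v⟫ - ‖ρ‖ * (‖a‖ - ‖a - v‖ - ⟪a, v⟫ / ‖a‖)`. The first summand is at most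
the chord `‖ρ - ρ'‖ ≤ ‖ρ‖ * ∠(a, ρ)` times `‖v‖`; the second is the remainder of the first-order
expansion of the norm at `a`, at most `‖ρ‖ * ‖v‖² / (2‖a‖)`. With `∠(a, ρ) ≤ θ`, `‖v‖ ≤ K` and
`‖a‖ ≥ θ⁻²` both are `O(θ)`.
-/

open RealInnerProductSpace InnerProductGeometry

section

variable {F : Type*} [NormedAddCommGroup F] [InnerProductSpace ℝ F]

theorem norm_sub_le_norm_mul_angle_of_norm_eq {x y : F} (h : ‖x‖ = ‖y‖) :
    ‖x - y‖ ≤ ‖x‖ * angle x y := by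
  have hcos := Real.one_sub_sq_div_two_le_cos (x := angle x y)
  have hsq : ‖x - y‖ ^ 2 ≤ (‖x‖ * angle x y) ^ 2 := by
    rw [sq ‖x - y‖, norm_sub_sq_eq_norm_sq_add_norm_sq_sub_two_mul_norm_mul_norm_mul_cos_angle, ← h]
    nlinarith [sq_nonneg ‖x‖]
  exact (pow_le_pow_iff_left₀ (norm_nonneg _) (by positivity [angle_nonneg x y]) two_ne_zero).mp hsq

theorem abs_norm_sub_norm_sub_inner_div_le {a : F} (ha : a ≠ 0) (v : F) :
    |‖a‖ - ‖a - v‖ - ⟪a, v⟫ / ‖a‖| ≤ ‖v‖ ^ 2 / (2 * ‖a‖) := by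
  have hr : 0 < ‖a‖ := norm_pos_iff.mpr ha
  set t := ⟪a, v⟫ / ‖a‖ with ht
  set s := ‖v‖ ^ 2 / (2 * ‖a‖) with hs
  have hta : ⟪a, v⟫ = ‖a‖ * t := by rw [ht]; field_simp
  have hsa : ‖v‖ ^ 2 = 2 * ‖a‖ * s := by rw [hs]; field_simp
  have hlow : ‖a‖ - t ≤ ‖a - v‖ := by
    have := real_inner_le_norm a (a - v)
    rw [inner_sub_right, real_inner_self_eq_norm_sq, hta] at this
    nlinarith
  have htv : t ≤ ‖v‖ := by
    have := real_inner_le_norm a v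
    rw [hta] at this
    nlinarith
  have hsq : ‖a - v‖ ^ 2 + (t - s) ^ 2 = (‖a‖ - t + s) ^ 2 := by
    rw [@norm_sub_sq_real, hta]
    linear_combination hsa
  have hup : ‖a - v‖ ≤ ‖a‖ - t + s := by
    have hpos : 0 ≤ ‖a‖ - t + s := by nlinarith [sq_nonneg (‖a‖ - ‖v‖)]
    nlinarith [sq_nonneg (t - s)]
  have hs0 : 0 ≤ s := by positivity
  rw [abs_le]
  constructor <;> linarith

theorem abs_inner_sub_inner_sub_norm_mul_le {a : F} (ha : a ≠ 0) (b ρ : F) :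
    |⟪ρ, a⟫ - ⟪ρ, b⟫ - ‖ρ‖ * (‖a‖ - ‖b‖)| ≤
      ‖ρ‖ * (angle a ρ * ‖a - b‖ + ‖a - b‖ ^ 2 / (2 * ‖a‖)) := by
  have hr : 0 < ‖a‖ := norm_pos_iff.mpr ha
  set w := ρ - (‖ρ‖ / ‖a‖) • a
  have hw : ‖w‖ ≤ ‖ρ‖ * angle a ρ := by
    rcases eq_or_ne ρ 0 with rfl | hρ
    · simp [w]
    have hc : 0 < ‖ρ‖ / ‖a‖ := div_pos (norm_pos_iff.mpr hρ) hr
    have := norm_sub_le_norm_mul_angle_of_norm_eq (x := ρ) (y := (‖ρ‖ / ‖a‖) • a)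
      (by rw [norm_smul, Real.norm_of_nonneg hc.le, div_mul_cancel₀ _ hr.ne'])
    rwa [angle_comm, angle_smul_left_of_pos _ _ hc] at this
  have hnorm := abs_norm_sub_norm_sub_inner_div_le ha (a - b)
  rw [sub_sub_cancel] at hnorm
  have hsplit : ⟪ρ, a⟫ - ⟪ρ, b⟫ - ‖ρ‖ * (‖a‖ - ‖b‖) =
      ⟪w, a - b⟫ - ‖ρ‖ * (‖a‖ - ‖b‖ - ⟪a, a - b⟫ / ‖a‖) := by
    simp only [w, inner_sub_left, inner_sub_right, real_inner_smul_left]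
    field_simp
    ring
  rw [hsplit]
  calc _ ≤ |⟪w, a - b⟫| + |‖ρ‖ * (‖a‖ - ‖b‖ - ⟪a, a - b⟫ / ‖a‖)| := abs_sub _ _
    _ ≤ ‖w‖ * ‖a - b‖ + ‖ρ‖ * (‖a - b‖ ^ 2 / (2 * ‖a‖)) := by
      rw [abs_mul, abs_norm]
      gcongr
      exact abs_real_inner_le_norm _ _
    _ ≤ _ := by
      rw [mul_add, ← mul_assoc]
      gcongr

end

theorem inner_sub_approx_norm_sub_general {E : Type*} [NormedAddCommGroup E]
    [InnerProductSpace ℝ E]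
    (ρ : E) (hρ : ρ ≠ 0) (K : ℝ) (hK : 0 < K) :
    ∃ C > (0 : ℝ), ∃ θ₀ ∈ Set.Ioo (0 : ℝ) 1, ∀ θ ∈ Set.Ioc (0 : ℝ) θ₀, ∀ a b : E,
      θ ^ (-2 : ℤ) ≤ ‖a‖ → ‖a - b‖ ≤ K → InnerProductGeometry.angle a ρ ≤ θ →
      |⟪ρ, a⟫ - ⟪ρ, b⟫ - ‖ρ‖ * (‖a‖ - ‖b‖)| ≤ C * θ := by
  have hρ' : 0 < ‖ρ‖ := norm_pos_iff.mpr hρ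
  refine ⟨‖ρ‖ * (K + K ^ 2 / 2), by positivity, 1 / 2, by norm_num, ?_⟩
  rintro θ ⟨hθ, hθ₀⟩ a b ha hab hangle
  have ha' : (θ ^ 2)⁻¹ ≤ ‖a‖ := by rwa [zpow_neg, zpow_two, ← sq] at ha
  have ha₀ : 0 < ‖a‖ := (by positivity : 0 < (θ ^ 2)⁻¹).trans_le ha'
  have hrem : ‖a - b‖ ^ 2 / (2 * ‖a‖) ≤ K ^ 2 / 2 * θ := by
    rw [div_le_iff₀ (by positivity)]
    have : 1 ≤ θ ^ 2 * ‖a‖ := by rwa [inv_le_iff_one_le_mul₀' (by positivity)] at ha'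
    have : ‖a - b‖ ^ 2 ≤ K ^ 2 := by gcongr
    nlinarith
  calc _ ≤ ‖ρ‖ * (angle a ρ * ‖a - b‖ + ‖a - b‖ ^ 2 / (2 * ‖a‖)) :=
        abs_inner_sub_inner_sub_norm_mul_le (norm_pos_iff.mp ha₀) b ρ
    _ ≤ ‖ρ‖ * (θ * K + K ^ 2 / 2 * θ) := by gcongr
    _ = _ := by ring

/-- If `ρ ≠ 0` and `K > 0`, then there are `C > 0` and `θ₀ ∈ (0,1)` such that for all
`θ ∈ (0, θ₀]` and all `a, b` with `‖a‖ ≥ θ⁻²`, `‖a - b‖ ≤ K` and `∠(a,ρ) ≤ θ`, one has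
`|⟨ρ,a⟩ − ⟨ρ,b⟩ − ‖ρ‖(‖a‖ − ‖b‖)| ≤ Cθ`. -/
theorem inner_sub_approx_norm_sub {E : Type*} [NormedAddCommGroup E]
    [InnerProductSpace ℝ E] [FiniteDimensional ℝ E]
    (ρ : E) (hρ : ρ ≠ 0) (K : ℝ) (hK : 0 < K) :
    ∃ C > (0 : ℝ), ∃ θ₀ ∈ Set.Ioo (0 : ℝ) 1, ∀ θ ∈ Set.Ioc (0 : ℝ) θ₀, ∀ a b : E,
      θ ^ (-2 : ℤ) ≤ ‖a‖ → ‖a - b‖ ≤ K → InnerProductGeometry.angle a ρ ≤ θ →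
      |⟪ρ, a⟫ - ⟪ρ, b⟫ - ‖ρ‖ * (‖a‖ - ‖b‖)| ≤ C * θ :=
  inner_sub_approx_norm_sub_general ρ hρ K hK
end

section
/- Let ρ ∈ E be nonzero and let K > 0. Then there exist C > 0 and θ₀ ∈ (0,1) such that for every θ ∈ (0, θ₀] and all vectors a, b ∈ E satisfying ‖a‖ ≥ θ^{−2}, ‖a − b‖ ≤ K, and ∠(a, ρ) ≤ θ, one has |cos ∠(b, ρ) − cos ∠(a, ρ)| ≤ C·θ/‖a‖ (note that b ≠ 0 under these hypotheses, so ∠(b, ρ) is defined). -/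
open RealInnerProductSpace InnerProductGeometry

/-!
With `x̂ = ‖x‖⁻¹ • x`, `cos ∠(b, ρ) - cos ∠(a, ρ) = ⟪d, ρ̂⟫` for `d = b̂ - â`, and
`‖d‖ ≤ 2‖b - a‖/‖a‖`. Write `⟪d, ρ̂⟫ = ⟪d, â⟫ + ⟪d, ρ̂ - â⟫`: as `â` and `b̂` are unit vectors,
`⟪d, â⟫ = -‖d‖²/2` is of second order, and the chord `‖ρ̂ - â‖` is at most the arc `∠(a, ρ) ≤ θ`.
So the difference is `O(1/‖a‖² + θ/‖a‖)`, and `1/‖a‖ ≤ θ²` absorbs the first term.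
-/

section

variable {V : Type*} [NormedAddCommGroup V]

theorem NormedSpace.norm_normalize_sub_normalize_le [NormedSpace ℝ V] {x : V} (hx : x ≠ 0)
    (y : V) : ‖normalize y - normalize x‖ ≤ 2 * ‖y - x‖ / ‖x‖ := by
  have hx' : 0 < ‖x‖ := norm_pos_iff.mpr hx
  rw [le_div_iff₀ hx', mul_comm, ← norm_norm x, ← norm_smul]
  by_cases hy : y = 0
  · simp only [hy, normalize, norm_zero, inv_zero, smul_zero, zero_sub, smul_neg, norm_neg,
      smul_inv_smul₀ hx'.ne']
    linarith
  have hy' : 0 < ‖y‖ := norm_pos_iff.mpr hy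
  have hsplit : ‖x‖ • (normalize y - normalize x) = ((‖x‖ - ‖y‖) / ‖y‖) • y + (y - x) := by
    rw [sub_div, div_self hy'.ne', sub_smul, one_smul, normalize, normalize, smul_sub, smul_smul,
      smul_smul, mul_inv_cancel₀ hx'.ne', one_smul, div_eq_mul_inv]
    abel
  calc ‖‖x‖ • (normalize y - normalize x)‖
      ≤ |‖x‖ - ‖y‖| + ‖y - x‖ := by
        rw [hsplit]
        refine (norm_add_le _ _).trans (le_of_eq ?_)
        rw [norm_smul, Real.norm_eq_abs, abs_div, abs_of_pos hy', div_mul_cancel₀ _ hy'.ne']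
    _ ≤ ‖y - x‖ + ‖y - x‖ := by
        gcongr
        rw [norm_sub_rev y x]
        exact abs_norm_sub_norm_le x y
    _ = 2 * ‖y - x‖ := by ring

open NormedSpace (norm_normalize norm_normalize_sub_normalize_le)

variable [InnerProductSpace ℝ V]

namespace InnerProductGeometry

theorem cos_angle_eq_inner_normalize (x y : V) :
    Real.cos (angle x y) = ⟪NormedSpace.normalize x, NormedSpace.normalize y⟫ := by
  rw [cos_angle, NormedSpace.normalize, NormedSpace.normalize, real_inner_smul_left,
    real_inner_smul_right]
  field_simp

theorem norm_sub_le_angle_of_norm_eq_one {x y : V} (hx : ‖x‖ = 1) (hy : ‖y‖ = 1) :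
    ‖x - y‖ ≤ angle x y := by
  have hsq : ‖x - y‖ ^ 2 ≤ angle x y ^ 2 := by
    rw [norm_sub_sq_real, hx, hy, inner_eq_cos_angle_of_norm_eq_one hx hy]
    linarith [Real.one_sub_sq_div_two_le_cos (x := angle x y)]
  exact (pow_le_pow_iff_left₀ (norm_nonneg _) (angle_nonneg x y) two_ne_zero).mp hsq

theorem inner_sub_eq_neg_norm_sub_sq_div_two_of_norm_eq_one {x y : V} (hx : ‖x‖ = 1)
    (hy : ‖y‖ = 1) : ⟪x - y, y⟫ = -(‖x - y‖ ^ 2 / 2) := by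
  rw [norm_sub_sq_real, inner_sub_left, real_inner_self_eq_norm_sq, hx, hy]
  ring

theorem abs_cos_angle_sub_cos_angle_le {x y z : V} (hx : x ≠ 0) (hy : y ≠ 0) (hz : z ≠ 0) :
    |Real.cos (angle y z) - Real.cos (angle x z)|
      ≤ 2 * (‖y - x‖ / ‖x‖) ^ 2 + 2 * (‖y - x‖ / ‖x‖) * angle x z := by
  set d := NormedSpace.normalize y - NormedSpace.normalize x
  have hd : ‖d‖ ≤ 2 * (‖y - x‖ / ‖x‖) := by
    rw [← mul_div_assoc]
    exact norm_normalize_sub_normalize_le hx y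
  have hsplit : Real.cos (angle y z) - Real.cos (angle x z)
      = -(‖d‖ ^ 2 / 2) + ⟪d, NormedSpace.normalize z - NormedSpace.normalize x⟫ := by
    rw [cos_angle_eq_inner_normalize, cos_angle_eq_inner_normalize, ← inner_sub_left,
      ← inner_sub_eq_neg_norm_sub_sq_div_two_of_norm_eq_one (norm_normalize hy)
        (norm_normalize hx),
      ← inner_add_right, add_sub_cancel]
  have hchord : ‖NormedSpace.normalize z - NormedSpace.normalize x‖ ≤ angle x z := by
    simpa [angle_comm x z] using
      norm_sub_le_angle_of_norm_eq_one (norm_normalize hz) (norm_normalize hx)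
  calc |Real.cos (angle y z) - Real.cos (angle x z)|
      ≤ ‖d‖ ^ 2 / 2 + ‖d‖ * angle x z := by
        rw [hsplit]
        refine (abs_add_le _ _).trans (add_le_add ?_ ?_)
        · rw [abs_neg, abs_of_nonneg (by positivity)]
        · exact (abs_real_inner_le_norm _ _).trans (by gcongr)
    _ ≤ (2 * (‖y - x‖ / ‖x‖)) ^ 2 / 2 + 2 * (‖y - x‖ / ‖x‖) * angle x z := by
        gcongr
        exact angle_nonneg x z
    _ = 2 * (‖y - x‖ / ‖x‖) ^ 2 + 2 * (‖y - x‖ / ‖x‖) * angle x z := by ring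

end InnerProductGeometry

end

theorem cos_angle_sub_approx_general {E : Type*} [NormedAddCommGroup E]
    [InnerProductSpace ℝ E]
    (ρ : E) (hρ : ρ ≠ 0) (K : ℝ) (hK : 0 < K) :
    ∃ C > (0 : ℝ), ∃ θ₀ ∈ Set.Ioo (0 : ℝ) 1, ∀ θ ∈ Set.Ioc (0 : ℝ) θ₀, ∀ a b : E,
      θ ^ (-2 : ℤ) ≤ ‖a‖ → ‖a - b‖ ≤ K → InnerProductGeometry.angle a ρ ≤ θ →
      |Real.cos (InnerProductGeometry.angle b ρ) -
          Real.cos (InnerProductGeometry.angle a ρ)| ≤ C * θ / ‖a‖ := by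
  refine ⟨2 * K ^ 2 + 2 * K, by positivity, 1 / (K + 1),
    ⟨by positivity, (div_lt_one (by positivity)).mpr (by linarith)⟩, ?_⟩
  rintro θ ⟨hθ, hθ₀⟩ a b ha hab hangle
  have hθK : θ * (K + 1) ≤ 1 := (le_div_iff₀ (by positivity)).mp hθ₀
  have ha₀ : 0 < ‖a‖ := lt_of_lt_of_le (by positivity) ha
  have ha_inv : ‖a‖⁻¹ ≤ θ := by
    rw [zpow_neg, zpow_ofNat] at ha
    calc ‖a‖⁻¹ ≤ θ ^ 2 := inv_le_of_inv_le₀ (by positivity) ha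
      _ ≤ θ := by nlinarith
  set t := ‖b - a‖ / ‖a‖
  have ht : t ≤ K / ‖a‖ := div_le_div_of_nonneg_right (by rwa [norm_sub_rev]) ha₀.le
  have htθ : t ≤ K * θ := ht.trans (by rw [div_eq_mul_inv]; gcongr)
  have hb : b ≠ 0 := by
    rintro rfl
    have ht_one : t = 1 := by simp [t, ha₀.ne']
    nlinarith
  calc |Real.cos (angle b ρ) - Real.cos (angle a ρ)|
      ≤ 2 * t ^ 2 + 2 * t * angle a ρ :=
        abs_cos_angle_sub_cos_angle_le (norm_pos_iff.mp ha₀) hb hρ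
    _ ≤ 2 * t * (K * θ) + 2 * t * θ := by
        have ht₀ : 0 ≤ t := by positivity
        nlinarith [mul_le_mul_of_nonneg_left htθ ht₀, mul_le_mul_of_nonneg_left hangle ht₀]
    _ = 2 * (K + 1) * θ * t := by ring
    _ ≤ 2 * (K + 1) * θ * (K / ‖a‖) := by gcongr
    _ = (2 * K ^ 2 + 2 * K) * θ / ‖a‖ := by ring

/-- If `ρ ≠ 0` and `K > 0`, then there are `C > 0` and `θ₀ ∈ (0,1)` such that for all
`θ ∈ (0, θ₀]` and all `a, b` with `‖a‖ ≥ θ⁻²`, `‖a - b‖ ≤ K` and `∠(a,ρ) ≤ θ`, one has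
`|cos ∠(b,ρ) − cos ∠(a,ρ)| ≤ Cθ/‖a‖`. -/
theorem cos_angle_sub_approx {E : Type*} [NormedAddCommGroup E]
    [InnerProductSpace ℝ E] [FiniteDimensional ℝ E]
    (ρ : E) (hρ : ρ ≠ 0) (K : ℝ) (hK : 0 < K) :
    ∃ C > (0 : ℝ), ∃ θ₀ ∈ Set.Ioo (0 : ℝ) 1, ∀ θ ∈ Set.Ioc (0 : ℝ) θ₀, ∀ a b : E,
      θ ^ (-2 : ℤ) ≤ ‖a‖ → ‖a - b‖ ≤ K → InnerProductGeometry.angle a ρ ≤ θ →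
      |Real.cos (InnerProductGeometry.angle b ρ) -
          Real.cos (InnerProductGeometry.angle a ρ)| ≤ C * θ / ‖a‖ :=
  cos_angle_sub_approx_general ρ hρ K hK
end

section
/- Let ρ ∈ E be nonzero and let K > 0. Then there exist C > 0 and θ₀ ∈ (0,1) such that for every θ ∈ (0, θ₀] and all vectors a, b ∈ E satisfying ‖a‖ ≥ θ^{−2}, ‖a − b‖ ≤ K, and ∠(a, ρ) ≤ θ, one has ‖ b/‖b‖ − ρ/‖ρ‖ ‖ ≤ C·θ (note that b ≠ 0 under these hypotheses). -/
/-!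
Write `n x = x / ‖x‖`. Unit vectors at angle `φ` are at distance `2 sin (φ / 2) ≤ φ`, so
`‖n a - n ρ‖ ≤ θ`. Moving from `a` to `b` changes the direction by at most `2 ‖a - b‖ / ‖a‖`,
which is at most `2 K θ²` because `‖a‖ ≥ θ⁻²`. Since `θ ≤ 1`, the sum is at most `(1 + 2 K) θ`.
-/

open InnerProductGeometry NormedSpace

section Normed

variable {V : Type*} [NormedAddCommGroup V] [NormedSpace ℝ V]

lemma norm_normalize_le_one (x : V) : ‖normalize x‖ ≤ 1 := by
  by_cases hx : x = 0
  · simp [hx]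
  · exact (norm_normalize hx).le

lemma norm_mul_norm_normalize_sub_normalize_le (x y : V) :
    ‖x‖ * ‖normalize y - normalize x‖ ≤ 2 * ‖y - x‖ := by
  have key : ‖x‖ • (normalize y - normalize x) = (‖x‖ - ‖y‖) • normalize y + (y - x) := by
    rw [smul_sub, norm_smul_normalize, sub_smul, norm_smul_normalize]
    abel
  calc ‖x‖ * ‖normalize y - normalize x‖
      = ‖(‖x‖ - ‖y‖) • normalize y + (y - x)‖ := by
        rw [← key, norm_smul, Real.norm_of_nonneg (norm_nonneg x)]
    _ ≤ |‖x‖ - ‖y‖| * 1 + ‖y - x‖ := by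
        grw [norm_add_le, norm_smul, Real.norm_eq_abs, norm_normalize_le_one]
    _ ≤ 2 * ‖y - x‖ := by
        linarith [abs_norm_sub_norm_le x y, norm_sub_rev x y]

end Normed

section InnerProduct

variable {V : Type*} [NormedAddCommGroup V] [InnerProductSpace ℝ V]

lemma norm_normalize_sub_normalize_le_angle (x y : V) :
    ‖normalize x - normalize y‖ ≤ angle x y := by
  by_cases hx : x = 0
  · simpa [hx] using (norm_normalize_le_one y).trans (by linarith [Real.pi_gt_three])
  by_cases hy : y = 0
  · simpa [hy] using (norm_normalize_le_one x).trans (by linarith [Real.pi_gt_three])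
  have hcos : ‖normalize x - normalize y‖ ^ 2 = 2 - 2 * Real.cos (angle x y) := by
    rw [sq, norm_sub_sq_eq_norm_sq_add_norm_sq_sub_two_mul_norm_mul_norm_mul_cos_angle,
      angle_normalize_left, angle_normalize_right, norm_normalize hx, norm_normalize hy]
    ring
  have hcos_ge := Real.one_sub_sq_div_two_le_cos (x := angle x y)
  exact (pow_le_pow_iff_left₀ (norm_nonneg _) (angle_nonneg x y) two_ne_zero).mp
    (by linarith)

end InnerProduct

theorem normalized_close_to_direction_general {E : Type*} [NormedAddCommGroup E]
    [InnerProductSpace ℝ E]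
    (ρ : E) (K : ℝ) (hK : 0 < K) :
    ∃ C > (0 : ℝ), ∃ θ₀ ∈ Set.Ioo (0 : ℝ) 1, ∀ θ ∈ Set.Ioc (0 : ℝ) θ₀, ∀ a b : E,
      θ ^ (-2 : ℤ) ≤ ‖a‖ → ‖a - b‖ ≤ K → InnerProductGeometry.angle a ρ ≤ θ →
      ‖(‖b‖⁻¹ • b) - (‖ρ‖⁻¹ • ρ)‖ ≤ C * θ := by
  refine ⟨1 + 2 * K, by positivity, 1 / 2, by norm_num, ?_⟩
  rintro θ ⟨hθ, hθ₀⟩ a b ha hab hangle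
  have hθa : 1 ≤ θ ^ 2 * ‖a‖ := by
    rwa [zpow_neg, zpow_ofNat, inv_le_iff_one_le_mul₀' (by positivity)] at ha
  have hba : ‖normalize b - normalize a‖ ≤ 2 * K * θ ^ 2 := by
    have hmul := norm_mul_norm_normalize_sub_normalize_le a b
    rw [norm_sub_rev b a] at hmul
    calc ‖normalize b - normalize a‖ ≤ θ ^ 2 * ‖a‖ * ‖normalize b - normalize a‖ :=
          le_mul_of_one_le_left (norm_nonneg _) hθa
      _ = θ ^ 2 * (‖a‖ * ‖normalize b - normalize a‖) := by ring
      _ ≤ 2 * K * θ ^ 2 := by nlinarith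
  have haρ : ‖normalize a - normalize ρ‖ ≤ θ :=
    (norm_normalize_sub_normalize_le_angle a ρ).trans hangle
  calc ‖normalize b - normalize ρ‖
      ≤ ‖normalize b - normalize a‖ + ‖normalize a - normalize ρ‖ :=
        norm_sub_le_norm_sub_add_norm_sub _ _ _
    _ ≤ 2 * K * θ ^ 2 + θ := add_le_add hba haρ
    _ ≤ (1 + 2 * K) * θ := by
        nlinarith [mul_nonneg (mul_nonneg hK.le hθ.le) (by linarith : 0 ≤ 1 - θ)]

/-- If `ρ ≠ 0` and `K > 0`, then there are `C > 0` and `θ₀ ∈ (0,1)` such that for all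
`θ ∈ (0, θ₀]` and all `a, b` with `‖a‖ ≥ θ⁻²`, `‖a - b‖ ≤ K` and `∠(a,ρ) ≤ θ`, one has
`‖b/‖b‖ − ρ/‖ρ‖‖ ≤ Cθ`. -/
theorem normalized_close_to_direction {E : Type*} [NormedAddCommGroup E]
    [InnerProductSpace ℝ E] [FiniteDimensional ℝ E]
    (ρ : E) (hρ : ρ ≠ 0) (K : ℝ) (hK : 0 < K) :
    ∃ C > (0 : ℝ), ∃ θ₀ ∈ Set.Ioo (0 : ℝ) 1, ∀ θ ∈ Set.Ioc (0 : ℝ) θ₀, ∀ a b : E,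
      θ ^ (-2 : ℤ) ≤ ‖a‖ → ‖a - b‖ ≤ K → InnerProductGeometry.angle a ρ ≤ θ →
      ‖(‖b‖⁻¹ • b) - (‖ρ‖⁻¹ • ρ)‖ ≤ C * θ :=
  normalized_close_to_direction_general ρ K hK
end

section
/- Let ρ ∈ E be nonzero, let (α_i)_{i∈I} be a finite family of vectors of E with ⟨α_i, ρ⟩ > 0 for every i ∈ I, and let K > 0. Then there exist C > 0 and θ₀ ∈ (0,1) such that for every θ ∈ (0, θ₀] and all vectors a, b ∈ E satisfying ‖a‖ ≥ θ^{−2}, ‖a − b‖ ≤ K, and ∠(a, ρ) ≤ θ, one has ⟨α_i, a⟩ > 0 for all i ∈ I and | ∏_{i∈I} ⟨α_i, b⟩/⟨α_i, a⟩ − 1 | ≤ C·θ. -/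
/-! If `∠(a, ρ) ≤ θ`, then `a` lies within `‖a‖ θ` of the point `(‖a‖ / ‖ρ‖) • ρ`, so
`⟪α i, a⟫ ≥ ‖a‖ (c i - ‖α i‖ θ)` with `c i = ⟪α i, ρ⟫ / ‖ρ‖ > 0`; for small `θ` this is at least
`‖a‖ c i / 2 ≥ c i / (2 θ²)`. Hence each ratio `⟪α i, b⟫ / ⟪α i, a⟫` differs from `1` by at most
`‖α i‖ K / ⟪α i, a⟫ = O(θ²)`, and a product of numbers `1 + x i` differs from `1` by at most
`exp (∑ |x i|) - 1 ≤ 2 ∑ |x i|`. -/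

open RealInnerProductSpace

theorem Finset.norm_prod_sub_one_le_two_mul_sum {ι R : Type*} [NormedCommRing R] [NormOneClass R]
    (s : Finset ι) (x : ι → R) (h : ∑ i ∈ s, ‖x i - 1‖ ≤ 1) :
    ‖∏ i ∈ s, x i - 1‖ ≤ 2 * ∑ i ∈ s, ‖x i - 1‖ := by
  have hsum : 0 ≤ ∑ i ∈ s, ‖x i - 1‖ := by positivity
  calc ‖∏ i ∈ s, x i - 1‖ = ‖∏ i ∈ s, (1 + (x i - 1)) - 1‖ := by simp
    _ ≤ Real.exp (∑ i ∈ s, ‖x i - 1‖) - 1 := s.norm_prod_one_add_sub_one_le _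
    _ ≤ 2 * ∑ i ∈ s, ‖x i - 1‖ := by
      have := Real.abs_exp_sub_one_le (by rwa [abs_of_nonneg hsum])
      rw [abs_of_nonneg hsum] at this
      exact (le_abs_self _).trans this

namespace InnerProductGeometry

variable {E : Type*} [NormedAddCommGroup E] [InnerProductSpace ℝ E]

theorem norm_sub_le_mul_angle_of_norm_eq {x y : E} (h : ‖x‖ = ‖y‖) :
    ‖x - y‖ ≤ ‖x‖ * angle x y := by
  have hcos := Real.one_sub_sq_div_two_le_cos (x := angle x y)
  rw [← pow_le_pow_iff_left₀ (norm_nonneg _)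
    (mul_nonneg (norm_nonneg _) (angle_nonneg x y)) two_ne_zero, sq, sq,
    norm_sub_sq_eq_norm_sq_add_norm_sq_sub_two_mul_norm_mul_norm_mul_cos_angle, ← h]
  nlinarith [mul_self_nonneg ‖x‖]

theorem mul_sub_le_inner_of_angle_le (α : E) {a ρ : E} (hρ : ρ ≠ 0) {θ : ℝ}
    (h : angle a ρ ≤ θ) : ‖a‖ * (⟪α, ρ⟫ / ‖ρ‖ - ‖α‖ * θ) ≤ ⟪α, a⟫ := by
  rcases eq_or_ne a 0 with rfl | ha
  · simp
  have hρn : 0 < ‖ρ‖ := norm_pos_iff.mpr hρ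
  set y := (‖a‖ / ‖ρ‖) • ρ
  have hy : ‖a‖ = ‖y‖ := by
    rw [norm_smul, Real.norm_of_nonneg (by positivity), div_mul_cancel₀ _ hρn.ne']
  have hangle : angle a y = angle a ρ := angle_smul_right_of_pos _ _ (by positivity)
  have hchord : ‖a - y‖ ≤ ‖a‖ * θ :=
    (norm_sub_le_mul_angle_of_norm_eq hy).trans (by rw [hangle]; gcongr)
  calc ‖a‖ * (⟪α, ρ⟫ / ‖ρ‖ - ‖α‖ * θ) ≤ ⟪α, y⟫ - ‖α‖ * ‖a - y‖ := by
        rw [real_inner_smul_right, div_mul_comm, mul_comm (⟪α, ρ⟫ / ‖ρ‖)]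
        nlinarith [mul_le_mul_of_nonneg_left hchord (norm_nonneg α)]
    _ ≤ ⟪α, y⟫ + ⟪α, a - y⟫ := by linarith [neg_abs_le ⟪α, a - y⟫, abs_real_inner_le_norm α (a - y)]
    _ = ⟪α, a⟫ := by rw [inner_sub_right]; ring

end InnerProductGeometry

theorem abs_inner_div_inner_sub_one_le {E : Type*} [NormedAddCommGroup E] [InnerProductSpace ℝ E]
    {α a b : E} {c : ℝ} (hc : 0 < c) (ha : 0 < ‖a‖)
    (hlow : ‖a‖ * c ≤ 2 * ⟪α, a⟫) :
    |⟪α, b⟫ / ⟪α, a⟫ - 1| ≤ 2 * (‖α‖ / c) * ‖a - b‖ * ‖a‖⁻¹ := by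
  have hαa : 0 < ⟪α, a⟫ := by nlinarith
  have hnum : |⟪α, b - a⟫| ≤ ‖α‖ * ‖a - b‖ := by
    rw [← norm_neg (a - b), neg_sub]; exact abs_real_inner_le_norm α (b - a)
  calc |⟪α, b⟫ / ⟪α, a⟫ - 1| = |⟪α, b - a⟫| / ⟪α, a⟫ := by
        rw [inner_sub_right, div_sub_one hαa.ne', abs_div, abs_of_pos hαa]
    _ ≤ ‖α‖ * ‖a - b‖ / (‖a‖ * c / 2) := by
        gcongr
        linarith
    _ = 2 * (‖α‖ / c) * ‖a - b‖ * ‖a‖⁻¹ := by field_simp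

theorem prod_inner_ratio_close_to_one_general {E : Type*} [NormedAddCommGroup E]
    [InnerProductSpace ℝ E]
    (ρ : E) (hρ : ρ ≠ 0) {I : Type*} [Fintype I] (α : I → E)
    (hα : ∀ i, 0 < ⟪α i, ρ⟫) (K : ℝ) (hK : 0 < K) :
    ∃ C > (0 : ℝ), ∃ θ₀ ∈ Set.Ioo (0 : ℝ) 1, ∀ θ ∈ Set.Ioc (0 : ℝ) θ₀, ∀ a b : E,
      θ ^ (-2 : ℤ) ≤ ‖a‖ → ‖a - b‖ ≤ K → InnerProductGeometry.angle a ρ ≤ θ →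
      (∀ i, 0 < ⟪α i, a⟫) ∧ |(∏ i, ⟪α i, b⟫ / ⟪α i, a⟫) - 1| ≤ C * θ := by
  set c : I → ℝ := fun i => ⟪α i, ρ⟫ / ‖ρ‖
  have hc (i : I) : 0 < c i := div_pos (hα i) (norm_pos_iff.mpr hρ)
  -- A sum rather than `max ‖α i‖ / min c i`, which would need `I` nonempty.
  set S := ∑ i, ‖α i‖ / c i
  have hS : 0 ≤ S := Finset.sum_nonneg fun i _ => div_nonneg (norm_nonneg _) (hc i).le
  refine ⟨2, two_pos, 1 / (2 * (1 + S) * (1 + K)), ⟨by positivity, ?_⟩,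
    fun θ ⟨hθ, hθθ₀⟩ a b ha hab hang => ?_⟩
  · rw [div_lt_one (by positivity)]; nlinarith
  rw [le_div_iff₀ (by positivity)] at hθθ₀
  obtain ⟨hθ1, hSθ, hSKθ⟩ : θ ≤ 1 ∧ 2 * S * θ ≤ 1 ∧ 2 * S * K * θ ≤ 1 := by
    refine ⟨?_, ?_, ?_⟩ <;>
      nlinarith [mul_nonneg hθ.le hK.le, mul_nonneg (mul_nonneg hθ.le hS) hK.le]
  have hapos : 0 < ‖a‖ := (zpow_pos hθ _).trans_le ha
  have hainv : ‖a‖⁻¹ ≤ θ ^ 2 := by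
    rwa [zpow_neg, inv_le_comm₀ (by positivity) hapos, zpow_ofNat] at ha
  have hlow (i : I) : ‖a‖ * c i ≤ 2 * ⟪α i, a⟫ := by
    have hαi : ‖α i‖ ≤ S * c i := (div_le_iff₀ (hc i)).mp <|
      Finset.single_le_sum (fun j _ => div_nonneg (norm_nonneg (α j)) (hc j).le) (Finset.mem_univ i)
    nlinarith [InnerProductGeometry.mul_sub_le_inner_of_angle_le (α i) hρ hang,
      mul_le_mul_of_nonneg_right hαi hθ.le, mul_nonneg hapos.le (hc i).le]
  refine ⟨fun i => by nlinarith [hlow i, hc i], ?_⟩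
  have hratio (i : I) : |⟪α i, b⟫ / ⟪α i, a⟫ - 1| ≤ 2 * (‖α i‖ / c i) * K * θ ^ 2 :=
    (abs_inner_div_inner_sub_one_le (hc i) hapos (hlow i)).trans (by have := hc i; gcongr)
  have hsum : ∑ i, |⟪α i, b⟫ / ⟪α i, a⟫ - 1| ≤ θ :=
    calc ∑ i, |⟪α i, b⟫ / ⟪α i, a⟫ - 1| ≤ ∑ i, 2 * (‖α i‖ / c i) * K * θ ^ 2 :=
          Finset.sum_le_sum fun i _ => hratio i
      _ = 2 * S * K * θ * θ := by
        simp only [S, Finset.mul_sum, Finset.sum_mul]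
        exact Finset.sum_congr rfl fun i _ => by ring
      _ ≤ θ := mul_le_of_le_one_left hθ.le hSKθ
  have hprod := Finset.univ.norm_prod_sub_one_le_two_mul_sum (fun i => ⟪α i, b⟫ / ⟪α i, a⟫)
    (by simpa only [Real.norm_eq_abs] using hsum.trans hθ1)
  simp only [Real.norm_eq_abs] at hprod
  linarith

/-- If `ρ ≠ 0`, `(α_i)_{i∈I}` is a finite family with `⟨α_i,ρ⟩ > 0` for all `i`, and
`K > 0`, then there are `C > 0` and `θ₀ ∈ (0,1)` such that for all `θ ∈ (0, θ₀]` and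
all `a, b` with `‖a‖ ≥ θ⁻²`, `‖a - b‖ ≤ K` and `∠(a,ρ) ≤ θ`, one has `⟨α_i,a⟩ > 0`
for all `i` and `|∏_i ⟨α_i,b⟩/⟨α_i,a⟩ − 1| ≤ Cθ`. -/
theorem prod_inner_ratio_close_to_one {E : Type*} [NormedAddCommGroup E]
    [InnerProductSpace ℝ E] [FiniteDimensional ℝ E]
    (ρ : E) (hρ : ρ ≠ 0) {I : Type*} [Fintype I] (α : I → E)
    (hα : ∀ i, 0 < ⟪α i, ρ⟫) (K : ℝ) (hK : 0 < K) :
    ∃ C > (0 : ℝ), ∃ θ₀ ∈ Set.Ioo (0 : ℝ) 1, ∀ θ ∈ Set.Ioc (0 : ℝ) θ₀, ∀ a b : E,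
      θ ^ (-2 : ℤ) ≤ ‖a‖ → ‖a - b‖ ≤ K → InnerProductGeometry.angle a ρ ≤ θ →
      (∀ i, 0 < ⟪α i, a⟫) ∧ |(∏ i, ⟪α i, b⟫ / ⟪α i, a⟫) - 1| ≤ C * θ :=
  prod_inner_ratio_close_to_one_general ρ hρ α hα K hK
end

section
/- Let a, c ∈ E with a ≠ 0 and 2‖c‖ ≤ ‖a‖. Then | ‖a‖ − ‖a − c‖ − ⟨a, c⟩/‖a‖ | ≤ 2‖c‖²/‖a‖. -/
open RealInnerProductSpace

/-- If `a ≠ 0` and `2‖c‖ ≤ ‖a‖`, then `|‖a‖ − ‖a − c‖ − ⟨a,c⟩/‖a‖| ≤ 2‖c‖²/‖a‖`. -/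
theorem norm_sub_norm_sub_approx_inner {E : Type*} [NormedAddCommGroup E]
    [InnerProductSpace ℝ E] [FiniteDimensional ℝ E]
    (a c : E) (ha : a ≠ 0) (hc : 2 * ‖c‖ ≤ ‖a‖) :
    |‖a‖ - ‖a - c‖ - ⟪a, c⟫ / ‖a‖| ≤ 2 * ‖c‖ ^ 2 / ‖a‖ := by
  set s := ‖a‖ with hs_def
  set t := ‖a - c‖ with ht_def
  set p := ⟪a, c⟫ with hp_def
  have hs : 0 < s := norm_pos_iff.mpr ha
  have ht : 0 ≤ t := norm_nonneg _
  have hcn : 0 ≤ ‖c‖ := norm_nonneg _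
  have hkey : t ^ 2 = s ^ 2 - 2 * p + ‖c‖ ^ 2 := norm_sub_sq_real a c
  have hp : |p| ≤ s * ‖c‖ := abs_real_inner_le_norm a c
  have hd : |s - t| ≤ ‖c‖ := by
    have h := abs_norm_sub_norm_le a (a - c)
    simpa using h
  have hden : 0 < s * (s + t) := by positivity
  have hX : s - t - p / s = (p * (s - t) - s * ‖c‖ ^ 2) / (s * (s + t)) := by
    rw [eq_div_iff hden.ne']
    field_simp
    nlinarith [hkey]
  have habs : |p * (s - t) - s * ‖c‖ ^ 2| ≤ 2 * s * ‖c‖ ^ 2 := by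
    calc |p * (s - t) - s * ‖c‖ ^ 2| ≤ |p * (s - t)| + |s * ‖c‖ ^ 2| := abs_sub _ _
      _ = |p| * |s - t| + s * ‖c‖ ^ 2 := by
          rw [abs_mul, abs_of_nonneg (by positivity : (0:ℝ) ≤ s * ‖c‖ ^ 2)]
      _ ≤ s * ‖c‖ * ‖c‖ + s * ‖c‖ ^ 2 := by
          have h1 : |p| * |s - t| ≤ (s * ‖c‖) * ‖c‖ :=
            mul_le_mul hp hd (abs_nonneg _) (by positivity)
          linarith
      _ = 2 * s * ‖c‖ ^ 2 := by ring
  rw [hX, abs_div, abs_of_pos hden, div_le_div_iff₀ hden hs]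
  nlinarith [mul_le_mul_of_nonneg_right habs hs.le, mul_nonneg (mul_nonneg (mul_nonneg hcn hcn) hs.le) ht]
end

section
/- Let s ≥ 0 and c ∈ [−1, 1], and for r ≥ 0 set X(r) = cosh(r)·cosh(s) − c·sinh(r)·sinh(s). Then X(r) ≥ 1 for all r ≥ 0, and the hyperbolic distance function d(r) = log(X(r) + √(X(r)² − 1)) (i.e. d(r) = arcosh X(r)) satisfies lim_{r→∞} (d(r) − r) = log(cosh(s) − c·sinh(s)). -/
open Filter Real

/-- For `s ≥ 0`, `c ∈ [-1,1]` and `X(r) = cosh r cosh s − c sinh r sinh s`, one has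
`X(r) ≥ 1` for all `r ≥ 0`, and the hyperbolic distance `d(r) = log(X(r) + √(X(r)² − 1))`
satisfies `d(r) − r → log(cosh s − c sinh s)` as `r → ∞`. -/
theorem hyperbolic_distance_asymptotics (s c : ℝ) (hs : 0 ≤ s)
    (hc : c ∈ Set.Icc (-1 : ℝ) 1) :
    (∀ r ≥ (0 : ℝ), 1 ≤ Real.cosh r * Real.cosh s - c * Real.sinh r * Real.sinh s) ∧
    Tendsto
      (fun r : ℝ =>
        Real.log ((Real.cosh r * Real.cosh s - c * Real.sinh r * Real.sinh s) +
          Real.sqrt ((Real.cosh r * Real.cosh s - c * Real.sinh r * Real.sinh s) ^ 2 - 1)) - r)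
      atTop (nhds (Real.log (Real.cosh s - c * Real.sinh s))) := by
  obtain ⟨hc1, hc2⟩ := hc
  have hss : 0 ≤ Real.sinh s := Real.sinh_nonneg_iff.mpr hs
  have hX : ∀ r ≥ (0:ℝ), 1 ≤ Real.cosh r * Real.cosh s - c * Real.sinh r * Real.sinh s := by
    intro r hr
    have h1 := Real.cosh_sub r s
    have h2 := Real.one_le_cosh (r - s)
    have hsr : 0 ≤ Real.sinh r := Real.sinh_nonneg_iff.mpr hr
    nlinarith [mul_nonneg hsr hss]
  refine ⟨hX, ?_⟩
  set A := Real.cosh s - c * Real.sinh s with hAdef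
  set B := Real.cosh s + c * Real.sinh s with hBdef
  have hA : 0 < A := by
    have := Real.cosh_sub_sinh s
    nlinarith [Real.exp_pos (-s)]
  set F : ℝ → ℝ := fun t => Real.log ((A + t * B)/2 + Real.sqrt (((A + t*B)/2)^2 - t)) with hFdef
  have hval0 : (A + 0 * B)/2 + Real.sqrt (((A + 0*B)/2)^2 - 0) = A := by
    rw [zero_mul, add_zero, sub_zero, Real.sqrt_sq (by positivity)]
    ring
  have hF0 : F 0 = Real.log A := by rw [hFdef]; simp only; rw [hval0]
  have hin : Continuous (fun t : ℝ => (A + t*B)/2 + Real.sqrt (((A + t*B)/2)^2 - t)) := by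
    fun_prop
  have hcont : ContinuousAt F 0 := by
    apply ContinuousAt.log hin.continuousAt
    rw [hval0]; exact ne_of_gt hA
  have hg : Tendsto (fun r : ℝ => Real.exp (-(2*r))) atTop (nhds 0) := by
    apply Real.tendsto_exp_neg_atTop_nhds_zero.comp
    exact tendsto_id.const_mul_atTop two_pos
  have hcomp : Tendsto (fun r : ℝ => F (Real.exp (-(2*r)))) atTop (nhds (Real.log A)) := by
    rw [← hF0]
    exact hcont.tendsto.comp hg
  apply hcomp.congr'
  filter_upwards [eventually_ge_atTop (0:ℝ)] with r hr
  set X := Real.cosh r * Real.cosh s - c * Real.sinh r * Real.sinh s with hXdef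
  have hXr : 1 ≤ X := hX r hr
  have h1 : Real.exp r * Real.exp (-r) = 1 := by rw [← Real.exp_add]; simp
  have h2 : Real.exp (-(2*r)) = Real.exp (-r) * Real.exp (-r) := by
    rw [← Real.exp_add]; ring_nf
  have hid : (A + Real.exp (-(2*r)) * B)/2 = X * Real.exp (-r) := by
    rw [hXdef, hAdef, hBdef, Real.cosh_eq r, Real.sinh_eq r, h2]
    ring_nf
    nlinarith [h1]
  have hsq : (X * Real.exp (-r))^2 - Real.exp (-(2*r))
      = Real.exp (-r)^2 * (X^2 - 1) := by
    rw [h2]; ring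
  rw [hFdef]; simp only
  rw [hid, hsq, Real.sqrt_mul (sq_nonneg _), Real.sqrt_sq (Real.exp_nonneg _)]
  have hpos : 0 < X + Real.sqrt (X^2 - 1) := by
    have := Real.sqrt_nonneg (X^2 - 1); linarith
  rw [show X * Real.exp (-r) + Real.exp (-r) * Real.sqrt (X^2-1)
      = Real.exp (-r) * (X + Real.sqrt (X^2-1)) by ring,
    Real.log_mul (Real.exp_ne_zero _) (ne_of_gt hpos), Real.log_exp]
  ring
end

section
/- Let n ≥ 2 be an integer, let p ∈ [1, 2), let s ≥ 0 and c ∈ [−1, 1]. Let r : (0, ∞) → (0, ∞) be a function with lim_{t→∞} r(t)/t = (2/p − 1)·(n − 1). For t > 0 set X(t) = cosh(r(t))·cosh(s) − c·sinh(r(t))·sinh(s) and d(t) = log(X(t) + √(X(t)² − 1)). Then lim_{t→∞} exp( −((n−1)/2)·(d(t) − r(t)) − (d(t)² − r(t)²)/(4t) ) = (cosh(s) − c·sinh(s))^{−(n−1)/p}. -/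
/-! With `A = cosh s − c sinh s`, the argument `X` of `arcosh` in `d = hypDist s c r` satisfies
`X e^{-r} = A/2 + e^{-2r} (cosh s + c sinh s)/2`, so `d − r = log (X e^{-r} + √(X² − 1) e^{-r})`
is a continuous function of `e^{-r}` with value `log A` at `0`; hence `d − r → log A`.
Then `d² − r² = (d − r)(2r + (d − r)) ≈ 2 α t log A` when `r ≈ α t`, and the exponent tends to
`−((n−1)/2) log A − (α/2) log A = −((n−1)/p) log A` for `α = (2/p − 1)(n − 1)`. -/

open Filter Real

/-- The hyperbolic distance between two points of real hyperbolic space at distances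
`r` and `s` from a base point, whose connecting directions make angle `arccos c`:
`arcosh (cosh r cosh s − c sinh r sinh s)`. -/
noncomputable def hypDist (s c r : ℝ) : ℝ :=
  Real.log ((Real.cosh r * Real.cosh s - c * Real.sinh r * Real.sinh s) +
    Real.sqrt ((Real.cosh r * Real.cosh s - c * Real.sinh r * Real.sinh s) ^ 2 - 1))

lemma cosh_sub_mul_sinh_pos {s c : ℝ} (hc : |c| ≤ 1) : 0 < cosh s - c * sinh s := by
  have h : |c * sinh s| < cosh s :=
    calc |c * sinh s| = |c| * |sinh s| := abs_mul c (sinh s)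
      _ ≤ |sinh s| := mul_le_of_le_one_left (abs_nonneg _) hc
      _ < cosh s := by rw [abs_sinh, ← cosh_abs s]; exact sinh_lt_cosh |s|
  linarith [le_abs_self (c * sinh s)]

lemma tendsto_hypDist_sub_self {s c : ℝ} (hA : 0 < cosh s - c * sinh s) :
    Tendsto (fun x => hypDist s c x - x) atTop (nhds (log (cosh s - c * sinh s))) := by
  set A := cosh s - c * sinh s
  set B := cosh s + c * sinh s
  set g : ℝ → ℝ := fun u => A / 2 + u ^ 2 * B / 2 + √((A / 2 + u ^ 2 * B / 2) ^ 2 - u ^ 2)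
  have hg : Tendsto g (nhds 0) (nhds A) := by
    have hg0 : g 0 = A := by
      simp only [g]
      rw [zero_pow two_ne_zero, zero_mul, zero_div, add_zero, sub_zero, sqrt_sq (by linarith)]
      ring
    exact hg0 ▸ (by fun_prop : Continuous g).tendsto 0
  have hg_exp := hg.comp tendsto_exp_neg_atTop_nhds_zero
  refine ((continuousAt_log hA.ne').tendsto.comp hg_exp).congr' ?_
  filter_upwards [hg_exp.eventually (eventually_gt_nhds hA)] with x hx
  set X := cosh x * cosh s - c * sinh x * sinh s
  set u := exp (-x)
  have hXu : A / 2 + u ^ 2 * B / 2 = X * u := by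
    have hxu : exp x * u = 1 := by rw [← exp_add, add_neg_cancel, exp_zero]
    simp only [X, A, B, cosh_eq x, sinh_eq x]
    linear_combination -(cosh s - c * sinh s) / 2 * hxu
  have hgu : g u = (X + √(X ^ 2 - 1)) * u := by
    simp only [g]
    rw [hXu, show (X * u) ^ 2 - u ^ 2 = (X ^ 2 - 1) * u ^ 2 by ring,
      sqrt_mul' _ (sq_nonneg u), sqrt_sq (exp_pos _).le]
    ring
  have hX : X + √(X ^ 2 - 1) ≠ 0 := by
    rintro h
    simp only [Function.comp_apply] at hx
    rw [hgu, h, zero_mul] at hx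
    exact lt_irrefl 0 hx
  simp only [Function.comp_apply]
  rw [hgu, log_mul hX (exp_pos _).ne', log_exp, hypDist]
  ring

lemma tendsto_sq_sub_sq_div_self {d r : ℝ → ℝ} {L α : ℝ}
    (hdr : Tendsto (fun t => d t - r t) atTop (nhds L))
    (hr : Tendsto (fun t => r t / t) atTop (nhds α)) :
    Tendsto (fun t => (d t ^ 2 - r t ^ 2) / t) atTop (nhds (L * (2 * α))) := by
  have hdr_div : Tendsto (fun t => (d t - r t) / t) atTop (nhds 0) :=
    hdr.div_atTop tendsto_id
  have hsum := (hdr.mul ((hr.const_mul 2).add hdr_div))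
  rw [add_zero] at hsum
  exact hsum.congr fun t => by ring

theorem heat_quotient_asymptotics_hyperbolic_general (n : ℕ) (hn : 2 ≤ n)
    (p : ℝ) (hp : p ∈ Set.Ico (1 : ℝ) 2) (s c : ℝ)
    (hc : c ∈ Set.Icc (-1 : ℝ) 1)
    (r : ℝ → ℝ)
    (hlim : Tendsto (fun t : ℝ => r t / t) atTop (nhds ((2 / p - 1) * ((n : ℝ) - 1)))) :
    Tendsto
      (fun t : ℝ =>
        Real.exp (-(((n : ℝ) - 1) / 2) * (hypDist s c (r t) - r t) -
          ((hypDist s c (r t)) ^ 2 - (r t) ^ 2) / (4 * t)))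
      atTop
      (nhds ((Real.cosh s - c * Real.sinh s) ^ (-((n : ℝ) - 1) / p))) := by
  have hp0 : 0 < p := by linarith [hp.1]
  have hn1 : (1 : ℝ) ≤ n - 1 := by
    have : (2 : ℝ) ≤ n := by exact_mod_cast hn
    linarith
  have hα : 0 < (2 / p - 1) * ((n : ℝ) - 1) :=
    mul_pos (sub_pos.2 ((one_lt_div hp0).2 hp.2)) (by linarith)
  have hA := cosh_sub_mul_sinh_pos (s := s) (abs_le.2 hc)
  have hdr := (tendsto_hypDist_sub_self hA).comp (tendsto_id.num hα hlim)
  have hquot := tendsto_sq_sub_sq_div_self hdr hlim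
  have hexponent := (hdr.const_mul (-(((n : ℝ) - 1) / 2))).sub (hquot.div_const 4)
  rw [rpow_def_of_pos hA]
  convert (continuous_exp.tendsto _).comp hexponent using 2
  · simp only [Function.comp_apply, div_div, mul_comm _ (4 : ℝ)]
  · congr 1
    field_simp
    ring

/-- Let `n ≥ 2`, `p ∈ [1,2)`, `s ≥ 0`, `c ∈ [-1,1]`, and `r : (0,∞) → (0,∞)` with
`r(t)/t → (2/p − 1)(n − 1)` as `t → ∞`. With `d(t)` the hyperbolic distance determined
by `r(t)`, `s` and `c`, one has
`exp(−((n−1)/2)(d(t) − r(t)) − (d(t)² − r(t)²)/(4t)) → (cosh s − c sinh s)^{−(n−1)/p}`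
as `t → ∞`. -/
theorem heat_quotient_asymptotics_hyperbolic (n : ℕ) (hn : 2 ≤ n)
    (p : ℝ) (hp : p ∈ Set.Ico (1 : ℝ) 2) (s c : ℝ) (hs : 0 ≤ s)
    (hc : c ∈ Set.Icc (-1 : ℝ) 1)
    (r : ℝ → ℝ) (hr : ∀ t > (0 : ℝ), 0 < r t)
    (hlim : Tendsto (fun t : ℝ => r t / t) atTop (nhds ((2 / p - 1) * ((n : ℝ) - 1)))) :
    Tendsto
      (fun t : ℝ =>
        Real.exp (-(((n : ℝ) - 1) / 2) * (hypDist s c (r t) - r t) -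
          ((hypDist s c (r t)) ^ 2 - (r t) ^ 2) / (4 * t)))
      atTop
      (nhds ((Real.cosh s - c * Real.sinh s) ^ (-((n : ℝ) - 1) / p))) :=
  heat_quotient_asymptotics_hyperbolic_general n hn p hp s c hc r hlim
end
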